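/- Either liminf_{n→∞} V(n)/n² > 0 or V(n)/n² → 0 as n → ∞. Equivalently: if liminf_{n→∞} V(n)/n² = 0, then V(n)/n² → 0. -/

import Mathlib

/-!
Dividing the kernel by `n²` gives `I_n(y)/n² ≤ 1`, equal to `1` at `y = 0` and at most
`1/(n² sin²(y/2)) → 0` for `y ∈ (0, π]`. By dominated convergence `V(n)/n² → μ{0}`, so the
sequence converges and its liminf is its limit.
-/

open MeasureTheory Filter Set Topology

/-- Fejér-type kernel: `I_n(y) = sin²(ny/2)/sin²(y/2)` for `y ≠ 0`, `I_n(0) = n²`. -/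
noncomputable def fejerKernel (n : ℕ) (y : ℝ) : ℝ :=
  if y = 0 then (n : ℝ) ^ 2 else Real.sin (n * y / 2) ^ 2 / Real.sin (y / 2) ^ 2

/-- Variance functional `V(n) = ∫_{[0,π]} I_n(y) dμ(y)`. -/
noncomputable def varV (μ : Measure ℝ) (n : ℕ) : ℝ :=
  ∫ y in Icc 0 Real.pi, fejerKernel n y ∂μ

/-- `G(x) = μ([0,x])` for a measure `μ` on `[0,π]`. -/
noncomputable def specG (μ : Measure ℝ) (x : ℝ) : ℝ :=
  (μ (Icc 0 x)).toReal

/-- A function `L : (0,∞) → (0,∞)` is slowly varying at infinity if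
`L(λx)/L(x) → 1` as `x → ∞` for every `λ > 0`. -/
def SlowlyVarying (L : ℝ → ℝ) : Prop :=
  ∀ lam : ℝ, 0 < lam → Tendsto (fun x => L (lam * x) / L x) atTop (𝓝 1)

lemma Real.abs_sin_nat_mul_le (n : ℕ) (t : ℝ) : |Real.sin (n * t)| ≤ n * |Real.sin t| := by
  induction n with
  | zero => simp
  | succ n ih =>
    push_cast
    rw [add_one_mul, Real.sin_add]
    calc |Real.sin (n * t) * Real.cos t + Real.cos (n * t) * Real.sin t|
        ≤ |Real.sin (n * t)| * |Real.cos t| + |Real.cos (n * t)| * |Real.sin t| := by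
          rw [← abs_mul, ← abs_mul]; exact abs_add_le _ _
      _ ≤ n * |Real.sin t| * 1 + 1 * |Real.sin t| := by
          gcongr
          exacts [Real.abs_cos_le_one t, Real.abs_cos_le_one _]
      _ = (n + 1) * |Real.sin t| := by ring

lemma measurable_fejerKernel (n : ℕ) : Measurable (fejerKernel n) :=
  Measurable.ite (measurableSet_singleton 0) measurable_const (by fun_prop)

lemma fejerKernel_nonneg (n : ℕ) (y : ℝ) : 0 ≤ fejerKernel n y := by
  unfold fejerKernel
  split <;> positivity

lemma fejerKernel_le_sq (n : ℕ) (y : ℝ) : fejerKernel n y ≤ (n : ℝ) ^ 2 := by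
  unfold fejerKernel
  split_ifs
  · rfl
  · refine div_le_of_le_mul₀ (sq_nonneg _) (sq_nonneg _) ?_
    rw [mul_div_assoc, ← sq_abs, ← sq_abs (Real.sin (y / 2)), ← mul_pow]
    exact pow_le_pow_left₀ (abs_nonneg _) (Real.abs_sin_nat_mul_le n (y / 2)) 2

lemma norm_fejerKernel_div_sq_le_one (n : ℕ) (y : ℝ) : ‖fejerKernel n y / (n : ℝ) ^ 2‖ ≤ 1 := by
  rw [Real.norm_of_nonneg (div_nonneg (fejerKernel_nonneg n y) (sq_nonneg _))]
  exact div_le_one_of_le₀ (fejerKernel_le_sq n y) (sq_nonneg _)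

lemma tendsto_fejerKernel_zero_div_sq :
    Tendsto (fun n : ℕ => fejerKernel n 0 / (n : ℝ) ^ 2) atTop (𝓝 1) := by
  refine tendsto_const_nhds.congr' ?_
  filter_upwards [eventually_ne_atTop 0] with n hn
  simp [fejerKernel, hn]

lemma tendsto_fejerKernel_div_sq_of_sin_ne_zero {y : ℝ} (hy : Real.sin (y / 2) ≠ 0) :
    Tendsto (fun n : ℕ => fejerKernel n y / (n : ℝ) ^ 2) atTop (𝓝 0) := by
  have hy0 : y ≠ 0 := by rintro rfl; simp at hy
  refine squeeze_zero (fun n => div_nonneg (fejerKernel_nonneg n y) (sq_nonneg _))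
    (g := fun n : ℕ => (1 / Real.sin (y / 2) ^ 2) / (n : ℝ) ^ 2) (fun n => ?_)
    (tendsto_const_nhds.div_atTop
      ((tendsto_pow_atTop two_ne_zero).comp tendsto_natCast_atTop_atTop))
  rw [fejerKernel, if_neg hy0]
  gcongr
  exact Real.sin_sq_le_one _

lemma tendsto_fejerKernel_div_sq_of_mem_Icc {y : ℝ} (hy : y ∈ Icc 0 Real.pi) :
    Tendsto (fun n : ℕ => fejerKernel n y / (n : ℝ) ^ 2) atTop
      (𝓝 (({0} : Set ℝ).indicator 1 y)) := by
  rcases eq_or_ne y 0 with rfl | hy0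
  · simpa using tendsto_fejerKernel_zero_div_sq
  · rw [indicator_of_notMem (by simpa using hy0)]
    refine tendsto_fejerKernel_div_sq_of_sin_ne_zero (Real.sin_pos_of_pos_of_lt_pi ?_ ?_).ne'
    · linarith [lt_of_le_of_ne hy.1 hy0.symm]
    · linarith [hy.2, Real.pi_pos]

lemma tendsto_varV_div_sq (μ : Measure ℝ) [IsFiniteMeasureOnCompacts μ] :
    Tendsto (fun n : ℕ => varV μ n / (n : ℝ) ^ 2) atTop (𝓝 (μ.real {0})) := by
  have hdom := tendsto_integral_of_dominated_convergence (μ := μ.restrict (Icc 0 Real.pi))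
    (fun _ => (1 : ℝ)) (fun n => ((measurable_fejerKernel n).div_const _).aestronglyMeasurable)
    (integrableOn_const isCompact_Icc.measure_lt_top.ne)
    (fun n => .of_forall (norm_fejerKernel_div_sq_le_one n))
    ((ae_restrict_iff' measurableSet_Icc).mpr
      (.of_forall fun _ => tendsto_fejerKernel_div_sq_of_mem_Icc))
  simp_rw [varV, ← integral_div]
  convert hdom using 2
  rw [integral_indicator_one (measurableSet_singleton 0),
    measureReal_restrict_apply (measurableSet_singleton 0),
    inter_eq_left.mpr (by simpa using Real.pi_pos.le)]

theorem variance_quadratic_dichotomy_general (μ : Measure ℝ) [IsFiniteMeasure μ]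
    (h : Filter.liminf (fun n : ℕ => varV μ n / (n : ℝ) ^ 2) atTop = 0) :
    Tendsto (fun n : ℕ => varV μ n / (n : ℝ) ^ 2) atTop (𝓝 0) := by
  have hlim := tendsto_varV_div_sq μ
  rwa [← hlim.liminf_eq, h] at hlim

/-- Dichotomy at `γ = 2`: if `liminf V(n)/n² = 0` then `V(n)/n² → 0`. -/
theorem variance_quadratic_dichotomy (μ : Measure ℝ) [IsFiniteMeasure μ]
    (hsupp : μ (Icc 0 Real.pi)ᶜ = 0)
    (h : Filter.liminf (fun n : ℕ => varV μ n / (n : ℝ) ^ 2) atTop = 0) :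
    Tendsto (fun n : ℕ => varV μ n / (n : ℝ) ^ 2) atTop (𝓝 0) :=
  variance_quadratic_dichotomy_general μ h
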